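/- Correctness of the resources-distribution encoding: let K = (V,E,ℓ) be a Kripke structure, k ≥ 1, d ≥ 1, let c_1,…,c_k be fresh atomic propositions, and let Φres := ∃¹c_1.…∃¹c_k. AG( (⋁_{1≤i≤k} c_i) ∨ EX( (⋁_i c_i) ∨ EX( … ∨ EX(⋁_i c_i) ) ) ) with d nested EX modalities. Then for every state x, K,x ⊨ Φres if and only if there exist states t_1,…,t_k, each reachable from x, such that every state reachable from x can reach some t_i using at most d transitions. -/

import Mathlib

open Classical

/-- Syntax of QCTL: `φ ::= q | ¬φ | φ∨ψ | EX φ | E φ U ψ | A φ U ψ | ∃p.φ`. -/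
inductive QCTL (AP : Type) : Type where
  | atom : AP → QCTL AP
  | qneg : QCTL AP → QCTL AP
  | qor  : QCTL AP → QCTL AP → QCTL AP
  | qEX  : QCTL AP → QCTL AP
  | qEU  : QCTL AP → QCTL AP → QCTL AP
  | qAU  : QCTL AP → QCTL AP → QCTL AP
  | qexi : AP → QCTL AP → QCTL AP

/-- A Kripke structure over atomic propositions `AP` with (finite) state space `V`:
a serial edge relation and a labelling function. -/
structure Kripke (AP V : Type) where
  E : V → V → Prop
  serial : ∀ v, ∃ w, E v w
  label : V → Set AP

variable {AP V : Type}

/-- `K'` agrees with `K` (same edges) except possibly on the labelling of `p`. -/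
def Kripke.AgreeExcept (K K' : Kripke AP V) (p : AP) : Prop :=
  K'.E = K.E ∧ ∀ v q, q ≠ p → (q ∈ K'.label v ↔ q ∈ K.label v)

/-- Structure semantics of QCTL. -/
def QCTL.sat : QCTL AP → Kripke AP V → V → Prop
  | .atom p, K, x => p ∈ K.label x
  | .qneg φ, K, x => ¬ φ.sat K x
  | .qor φ ψ, K, x => φ.sat K x ∨ ψ.sat K x
  | .qEX φ, K, x => ∃ y, K.E x y ∧ φ.sat K y
  | .qEU φ ψ, K, x => ∃ ρ : ℕ → V, ρ 0 = x ∧ (∀ i, K.E (ρ i) (ρ (i + 1))) ∧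
      ∃ i, ψ.sat K (ρ i) ∧ ∀ j < i, φ.sat K (ρ j)
  | .qAU φ ψ, K, x => ∀ ρ : ℕ → V, ρ 0 = x → (∀ i, K.E (ρ i) (ρ (i + 1))) →
      ∃ i, ψ.sat K (ρ i) ∧ ∀ j < i, φ.sat K (ρ j)
  | .qexi p φ, K, x => ∃ K' : Kripke AP V, K.AgreeExcept K' p ∧ φ.sat K' x

namespace QCTL

def qand (φ ψ : QCTL AP) : QCTL AP := qneg (qor (qneg φ) (qneg ψ))
def qimp (φ ψ : QCTL AP) : QCTL AP := qor (qneg φ) ψ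
def qiff (φ ψ : QCTL AP) : QCTL AP := qand (qimp φ ψ) (qimp ψ φ)
def qtop [Inhabited AP] : QCTL AP := qor (atom default) (qneg (atom default))
def qbot [Inhabited AP] : QCTL AP := qneg qtop
def qAX (φ : QCTL AP) : QCTL AP := qneg (qEX (qneg φ))
def qEF [Inhabited AP] (φ : QCTL AP) : QCTL AP := qEU qtop φ
def qAG [Inhabited AP] (φ : QCTL AP) : QCTL AP := qneg (qEF (qneg φ))
def qall (p : AP) (φ : QCTL AP) : QCTL AP := qneg (qexi p (qneg φ))

/-- All atomic propositions occurring in a formula (free or bound). -/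
def atoms : QCTL AP → Set AP
  | atom p => {p}
  | qneg φ => φ.atoms
  | qor φ ψ => φ.atoms ∪ ψ.atoms
  | qEX φ => φ.atoms
  | qEU φ ψ => φ.atoms ∪ ψ.atoms
  | qAU φ ψ => φ.atoms ∪ ψ.atoms
  | qexi p φ => insert p φ.atoms

/-- Size of a formula. -/
def qsize : QCTL AP → ℕ
  | atom _ => 1
  | qneg φ => φ.qsize + 1
  | qor φ ψ => φ.qsize + ψ.qsize + 1
  | qEX φ => φ.qsize + 1
  | qEU φ ψ => φ.qsize + ψ.qsize + 1
  | qAU φ ψ => φ.qsize + ψ.qsize + 1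
  | qexi _ φ => φ.qsize + 1

end QCTL

/-- Equivalence of two QCTL formulas: same truth value at every state of every
(finite) Kripke structure. -/
def QEquiv (φ ψ : QCTL AP) : Prop :=
  ∀ (V : Type) [Fintype V] (K : Kripke AP V) (x : V), φ.sat K x ↔ ψ.sat K x

/-- `∃p₁.…∃pₙ.φ` for a list of atomic propositions. -/
def exiMany {AP : Type} (l : List AP) (φ : QCTL AP) : QCTL AP := l.foldr QCTL.qexi φ

/-- Conjunction of a list of formulas, with a final base conjunct. -/
def conjList {AP : Type} (l : List (QCTL AP)) (base : QCTL AP) : QCTL AP :=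
  l.foldr QCTL.qand base

/-- Disjunction of a list of formulas, with a final base disjunct. -/
def disjList {AP : Type} (l : List (QCTL AP)) (base : QCTL AP) : QCTL AP :=
  l.foldr QCTL.qor base
/-- `E_{=1}F(φ) := EF φ ∧ ∀q.( EF(q∧φ) → AG(φ→q) )`, with `q` a fresh atom. -/
def EuniqF {AP : Type} [Inhabited AP] (q : AP) (φ : QCTL AP) : QCTL AP :=
  QCTL.qand (QCTL.qEF φ)
    (QCTL.qall q
      (QCTL.qimp (QCTL.qEF (QCTL.qand (QCTL.atom q) φ))
        (QCTL.qAG (QCTL.qimp φ (QCTL.atom q)))))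

/-- `∀¹p.φ := ∀p.( E_{=1}F(p) → φ )`, with `q` the fresh atom used inside `E_{=1}F`. -/
def qall1 {AP : Type} [Inhabited AP] (p q : AP) (φ : QCTL AP) : QCTL AP :=
  QCTL.qall p (QCTL.qimp (EuniqF q (QCTL.atom p)) φ)

/-- `∃¹p.φ := ∃p.( E_{=1}F(p) ∧ φ )`, with `q` the fresh atom used inside `E_{=1}F`. -/
def qexi1 {AP : Type} [Inhabited AP] (p q : AP) (φ : QCTL AP) : QCTL AP :=
  QCTL.qexi p (QCTL.qand (EuniqF q (QCTL.atom p)) φ)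
/-- `d` nested `EX` modalities: `goal ∨ EX( goal ∨ EX( … ∨ EX goal ))`. -/
def nestEX {AP : Type} : ℕ → QCTL AP → QCTL AP
  | 0, b => b
  | n + 1, b => QCTL.qor b (QCTL.qEX (nestEX n b))

/-- `Φres := ∃¹c₁.…∃¹cₖ. AG( (⋁ᵢcᵢ) ∨ EX( (⋁ᵢcᵢ) ∨ EX( … ∨ EX(⋁ᵢcᵢ) ) ) )`
with `d` nested `EX` modalities; `q i` is the fresh atom used by the `i`-th `∃¹`. -/
def PhiRes {AP : Type} [Inhabited AP] (k d : ℕ) (c q : Fin k → AP) : QCTL AP :=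
  (List.finRange k).foldr (fun i acc => qexi1 (c i) (q i) acc)
    (QCTL.qAG (nestEX d
      (disjList ((List.finRange k).map fun i => QCTL.atom (c i)) QCTL.qbot)))

/-- `y` can reach `t` using at most `n` transitions. -/
def stepsLE {V : Type} (E : V → V → Prop) : ℕ → V → V → Prop
  | 0, a, b => a = b
  | n + 1, a, b => a = b ∨ ∃ c, E a c ∧ stepsLE E n c b

/-!
The quantifiers `∃¹ cᵢ` are peeled off one at a time. The invariant is that, once the states
`tᵢ` for the already peeled quantifiers are fixed, the rest of the formula holds iff every
reachable state reaches within `d` steps either some chosen `tᵢ` or a state carrying a label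
`cⱼ` that is still free. A witness for `∃¹ cᵢ` is obtained by relabelling `cᵢ` to hold exactly
at `tᵢ`; conversely, uniqueness of the reachable `cᵢ`-state lets it play the role of `tᵢ`.
-/

open Relation

namespace Kripke

variable (K : Kripke AP V)

theorem exists_path (a : V) : ∃ ρ : ℕ → V, ρ 0 = a ∧ ∀ i, K.E (ρ i) (ρ (i + 1)) := by
  choose f hf using K.serial
  refine ⟨fun i => f^[i] a, rfl, fun i => ?_⟩
  simpa only [Function.iterate_succ_apply'] using hf (f^[i] a)

theorem reflTransGen_of_path {ρ : ℕ → V} (hρ : ∀ i, K.E (ρ i) (ρ (i + 1))) (i : ℕ) :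
    ReflTransGen K.E (ρ 0) (ρ i) := by
  induction i with
  | zero => exact .refl
  | succ j ih => exact ih.tail (hρ j)

theorem exists_path_of_reflTransGen {x y : V} (h : ReflTransGen K.E x y) :
    ∃ (ρ : ℕ → V) (n : ℕ), ρ 0 = x ∧ ρ n = y ∧ ∀ i, K.E (ρ i) (ρ (i + 1)) := by
  induction h using ReflTransGen.head_induction_on with
  | refl =>
    obtain ⟨ρ, h0, hρ⟩ := K.exists_path y
    exact ⟨ρ, 0, h0, h0, hρ⟩
  | @head a b hab _ ih =>
    obtain ⟨ρ, n, h0, hn, hρ⟩ := ih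
    refine ⟨fun | 0 => a | j + 1 => ρ j, n + 1, rfl, hn, ?_⟩
    rintro (_ | j)
    exacts [show K.E a (ρ 0) from h0 ▸ hab, hρ j]

def setLabel (p : AP) (P : V → Prop) : Kripke AP V where
  E := K.E
  serial := K.serial
  label v := {a | if a = p then P v else a ∈ K.label v}

variable {K} {p a : AP} {P : V → Prop} {v : V}

theorem agreeExcept_setLabel : K.AgreeExcept (K.setLabel p P) p :=
  ⟨rfl, fun _ _ h => by simp [setLabel, h]⟩

@[simp]
theorem mem_setLabel_self : p ∈ (K.setLabel p P).label v ↔ P v := by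
  simp [setLabel]

@[simp]
theorem mem_setLabel_of_ne (h : a ≠ p) : a ∈ (K.setLabel p P).label v ↔ a ∈ K.label v := by
  simp [setLabel, h]

end Kripke

theorem reflTransGen_of_stepsLE {E : V → V → Prop} :
    ∀ {n : ℕ} {a b : V}, stepsLE E n a b → ReflTransGen E a b
  | 0, _, _, h => h ▸ .refl
  | _ + 1, _, _, .inl h => h ▸ .refl
  | _ + 1, _, _, .inr ⟨_, hac, hcb⟩ => .head hac (reflTransGen_of_stepsLE hcb)

def CoveredWithin (E : V → V → Prop) (d : ℕ) (x : V) (M : V → Prop) : Prop :=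
  ∀ y, ReflTransGen E x y → ∃ z, stepsLE E d y z ∧ M z

theorem CoveredWithin.mono {E : V → V → Prop} {d : ℕ} {x : V} {M M' : V → Prop}
    (h : CoveredWithin E d x M) (hM : ∀ z, ReflTransGen E x z → M z → M' z) :
    CoveredWithin E d x M' := fun y hy =>
  let ⟨z, hz, hMz⟩ := h y hy
  ⟨z, hz, hM z (hy.trans (reflTransGen_of_stepsLE hz)) hMz⟩

namespace QCTL

variable {K : Kripke AP V} {x : V}

theorem sat_qand {φ ψ : QCTL AP} : (qand φ ψ).sat K x ↔ φ.sat K x ∧ ψ.sat K x := by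
  simp [qand, sat]

theorem sat_qimp {φ ψ : QCTL AP} : (qimp φ ψ).sat K x ↔ (φ.sat K x → ψ.sat K x) := by
  simp [qimp, sat, imp_iff_not_or]

theorem sat_qtop [Inhabited AP] : (qtop : QCTL AP).sat K x := by
  simp [qtop, sat, _root_.em]

theorem sat_qbot [Inhabited AP] : ¬ (qbot : QCTL AP).sat K x := by
  simp [qbot, qtop, sat]

theorem sat_qEF [Inhabited AP] {φ : QCTL AP} :
    (qEF φ).sat K x ↔ ∃ y, ReflTransGen K.E x y ∧ φ.sat K y := by
  constructor
  · rintro ⟨ρ, rfl, hρ, i, hi, -⟩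
    exact ⟨ρ i, K.reflTransGen_of_path hρ i, hi⟩
  · rintro ⟨y, hxy, hy⟩
    obtain ⟨ρ, n, h0, hn, hρ⟩ := K.exists_path_of_reflTransGen hxy
    exact ⟨ρ, h0, hρ, n, hn ▸ hy, fun _ _ => sat_qtop⟩

theorem sat_qAG [Inhabited AP] {φ : QCTL AP} :
    (qAG φ).sat K x ↔ ∀ y, ReflTransGen K.E x y → φ.sat K y := by
  simp [qAG, sat_qEF, sat]

theorem sat_qall {p : AP} {φ : QCTL AP} :
    (qall p φ).sat K x ↔ ∀ K' : Kripke AP V, K.AgreeExcept K' p → φ.sat K' x := by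
  simp [qall, sat]

theorem sat_nestEX {b : QCTL AP} :
    ∀ {n : ℕ} {x : V}, (nestEX n b).sat K x ↔ ∃ z, stepsLE K.E n x z ∧ b.sat K z
  | 0, x => by simp [nestEX, stepsLE]
  | n + 1, x => by
    simp only [nestEX, sat, stepsLE, sat_nestEX]
    constructor
    · rintro (h | ⟨y, hxy, z, hz, hb⟩)
      exacts [⟨x, .inl rfl, h⟩, ⟨z, .inr ⟨y, hxy, hz⟩, hb⟩]
    · rintro ⟨z, rfl | ⟨y, hxy, hz⟩, hb⟩
      exacts [.inl hb, .inr ⟨y, hxy, z, hz, hb⟩]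

theorem sat_disjList_atom [Inhabited AP] {l : List AP} :
    (disjList (l.map atom) qbot).sat K x ↔ ∃ a ∈ l, a ∈ K.label x := by
  induction l with
  | nil => simpa [disjList] using sat_qbot
  | cons a l ih => simp_all [disjList, sat]

end QCTL

open QCTL

/-- For `→`, relabel `q` to hold exactly at a reachable `p`-state `z`: then `AG (p → q)`
forces `z = t`. -/
theorem sat_EuniqF_atom [Inhabited AP] {K : Kripke AP V} {x : V} {p q : AP} (hpq : p ≠ q) :
    (EuniqF q (atom p)).sat K x ↔
      ∃ t, ReflTransGen K.E x t ∧ p ∈ K.label t ∧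
        ∀ z, ReflTransGen K.E x z → p ∈ K.label z → z = t := by
  simp only [EuniqF, sat_qand, sat_qEF, sat_qall, sat_qimp, sat_qAG, sat]
  constructor
  · rintro ⟨⟨t, hxt, ht⟩, huniq⟩
    refine ⟨t, hxt, ht, fun z hxz hz => ?_⟩
    have := huniq (K.setLabel q (· = z)) Kripke.agreeExcept_setLabel
      ⟨z, hxz, by simpa [hpq] using hz⟩ t hxt
    exact (by simpa [hpq, ht] using this : t = z).symm
  · rintro ⟨t, hxt, ht, huniq⟩
    refine ⟨⟨t, hxt, ht⟩, fun K' ⟨hE, hlabel⟩ ⟨y, hxy, hy, hyp⟩ w hxw hwp => ?_⟩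
    rw [hE] at hxy hxw
    have hy_eq := huniq y hxy ((hlabel y p hpq).mp hyp)
    have hw_eq := huniq w hxw ((hlabel w p hpq).mp hwp)
    exact hw_eq ▸ hy_eq ▸ hy

def IsMarked {k : ℕ} (c : Fin k → AP) (l : List (Fin k)) (t : Fin k → V) (K : Kripke AP V)
    (z : V) : Prop :=
  (∃ i ∈ l, t i = z) ∨ ∃ j ∉ l, c j ∈ K.label z

variable {k d : ℕ} {c q : Fin k → AP}

theorem isMarked_nil {t : Fin k → V} {K : Kripke AP V} :
    IsMarked c [] t K = fun z => ∃ j, c j ∈ K.label z := by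
  ext
  simp [IsMarked]

def coverFormula [Inhabited AP] (d : ℕ) (c : Fin k → AP) : QCTL AP :=
  qAG (nestEX d (disjList ((List.finRange k).map fun i => atom (c i)) qbot))

theorem sat_coverFormula [Inhabited AP] {K : Kripke AP V} {x : V} :
    (coverFormula d c).sat K x ↔ CoveredWithin K.E d x (fun z => ∃ j, c j ∈ K.label z) := by
  have hmap : (List.finRange k).map (fun i => atom (c i)) = ((List.finRange k).map c).map atom :=
    (List.map_map ..).symm
  rw [coverFormula, sat_qAG, hmap]
  simp only [CoveredWithin, sat_nestEX, sat_disjList_atom]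
  simp

theorem sat_qexi1_cons [Inhabited AP] (hcinj : Function.Injective c) {i : Fin k}
    (hcq : c i ≠ q i) {l : List (Fin k)} (hi : i ∉ l) {φ : QCTL AP} {K : Kripke AP V} {x : V}
    (ih : ∀ K' : Kripke AP V, K'.E = K.E → (φ.sat K' x ↔ ∃ t : Fin k → V,
      (∀ j ∈ l, ReflTransGen K.E x (t j)) ∧ CoveredWithin K.E d x (IsMarked c l t K')))
    {K' : Kripke AP V} (hE : K'.E = K.E) :
    (qexi1 (c i) (q i) φ).sat K' x ↔ ∃ t : Fin k → V, (∀ j ∈ i :: l, ReflTransGen K.E x (t j)) ∧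
      CoveredWithin K.E d x (IsMarked c (i :: l) t K') := by
  simp only [qexi1, sat, sat_qand, sat_EuniqF_atom hcq]
  constructor
  · rintro ⟨K₁, ⟨hE₁, hlabel₁⟩, ⟨s, hxs, -, huniq⟩, hφ⟩
    rw [hE₁, hE] at hxs huniq
    obtain ⟨t, ht, hcov⟩ := (ih K₁ (hE₁.trans hE)).mp hφ
    refine ⟨Function.update t i s, ?_, hcov.mono fun z hxz hz => ?_⟩
    · rintro j (_ | ⟨_, hj⟩)
      · simpa using hxs
      · simpa [Function.update_of_ne (ne_of_mem_of_not_mem hj hi)] using ht j hj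
    rcases hz with ⟨j, hj, rfl⟩ | ⟨j, hj, hjz⟩
    · exact .inl ⟨j, .tail _ hj, Function.update_of_ne (ne_of_mem_of_not_mem hj hi) _ _⟩
    · by_cases hji : j = i
      · subst hji
        exact .inl ⟨j, List.mem_cons_self, by simp [huniq z hxz hjz]⟩
      · exact .inr ⟨j, by simp [hji, hj], (hlabel₁ z (c j) (hcinj.ne hji)).mp hjz⟩
  · rintro ⟨t, ht, hcov⟩
    let K₁ := K'.setLabel (c i) (· = t i)
    refine ⟨K₁, Kripke.agreeExcept_setLabel,
      ⟨t i, hE ▸ ht i List.mem_cons_self, by simp [K₁], fun z _ hz => by simpa [K₁] using hz⟩,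
      (ih K₁ hE).mpr ⟨t, fun j hj => ht j (.tail _ hj), hcov.mono fun z _ hz => ?_⟩⟩
    rcases hz with ⟨j, hj, rfl⟩ | ⟨j, hj, hjz⟩
    · rcases List.mem_cons.mp hj with rfl | hj
      · exact .inr ⟨j, hi, by simp [K₁]⟩
      · exact .inl ⟨j, hj, rfl⟩
    · have hji : j ≠ i := fun h => hj (h ▸ List.mem_cons_self)
      exact .inr ⟨j, fun h => hj (.tail _ h), by simpa [K₁, hcinj.ne hji] using hjz⟩

theorem sat_foldr_qexi1 [Inhabited AP] (hcinj : Function.Injective c) (hcq : ∀ i, c i ≠ q i)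
    {K : Kripke AP V} {x : V} {l : List (Fin k)} (hl : l.Nodup) {K' : Kripke AP V}
    (hE : K'.E = K.E) :
    (l.foldr (fun i φ => qexi1 (c i) (q i) φ) (coverFormula d c)).sat K' x ↔
      ∃ t : Fin k → V, (∀ j ∈ l, ReflTransGen K.E x (t j)) ∧
        CoveredWithin K.E d x (IsMarked c l t K') := by
  induction l generalizing K' with
  | nil =>
    simp only [List.foldr_nil, sat_coverFormula, hE, isMarked_nil, List.not_mem_nil,
      IsEmpty.forall_iff, implies_true, true_and]
    exact ⟨fun h => ⟨fun _ => x, h⟩, fun ⟨_, h⟩ => h⟩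
  | cons i l ih =>
    obtain ⟨hi, hl⟩ := List.nodup_cons.mp hl
    exact sat_qexi1_cons hcinj (hcq i) hi (fun K'' hE'' => ih hl hE'') hE

theorem phiRes_correct_general {AP V : Type} [Inhabited AP]
    (K : Kripke AP V) (x : V) (k d : ℕ)
    (c q : Fin k → AP)
    (hcinj : Function.Injective c)
    (hcq : ∀ i j, c i ≠ q j) :
    (PhiRes k d c q).sat K x ↔
      (∃ t : Fin k → V,
        (∀ i, Relation.ReflTransGen K.E x (t i)) ∧
        (∀ y : V, Relation.ReflTransGen K.E x y → ∃ i, stepsLE K.E d y (t i))) := by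
  refine (sat_foldr_qexi1 (d := d) hcinj (fun i => hcq i i) (List.nodup_finRange k)
    (rfl : K.E = K.E)).trans (exists_congr fun t => and_congr (by simp) ?_)
  simp [CoveredWithin, IsMarked]

/-- Correctness of the resources-distribution encoding: `Φres` holds at `x` iff one can
choose `k` states reachable from `x` such that every state reachable from `x` can reach
one of them within at most `d` transitions. -/
theorem phiRes_correct {AP V : Type} [Inhabited AP] [Fintype V]
    (K : Kripke AP V) (x : V) (k d : ℕ) (hk : 1 ≤ k) (hd : 1 ≤ d)
    (c q : Fin k → AP)
    (hcinj : Function.Injective c) (hqinj : Function.Injective q)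
    (hcq : ∀ i j, c i ≠ q j)
    (hcfresh : ∀ i v, c i ∉ K.label v) (hqfresh : ∀ i v, q i ∉ K.label v) :
    (PhiRes k d c q).sat K x ↔
      (∃ t : Fin k → V,
        (∀ i, Relation.ReflTransGen K.E x (t i)) ∧
        (∀ y : V, Relation.ReflTransGen K.E x y → ∃ i, stepsLE K.E d y (t i))) :=
  phiRes_correct_general K x k d c q hcinj hcq
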